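/- Let ξ be a reward process such that there is an integrable random variable M with P-a.s. |ξ_t| ≤ M for all t ∈ [0,T], and let (V(S))_{S∈𝓣_0} be its value family. Assume that V admits monotone approximation at every θ ∈ 𝓣_0. Then V is the smallest strong supermartingale family dominating ξ, in the following sense: (a) V(S) ≥ ξ_S a.s. for every S ∈ 𝓣_0; (b) for all stopping times S, θ with S ≤ θ a.s., E[V(θ) | 𝓕_S] ≤ V(S) a.s.; and (c) if (V'(S))_{S∈𝓣_0} is any family of 𝓕_S-measurable integrable random variables with V'(S) ≥ ξ_S a.s. for every S ∈ 𝓣_0 and E[V'(θ) | 𝓕_S] ≤ V'(S) a.s. whenever S ≤ θ a.s., then V(S) ≤ V'(S) a.s. for every S ∈ 𝓣_0. -/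

import Mathlib

/- STATEMENT 10 (Proposition 4.2, classical expectation): the value family V of a
bounded (by an integrable M) reward ξ, admitting monotone approximation at every
stopping time, is the smallest strong supermartingale family dominating ξ. -/

open MeasureTheory Filter

open MeasureTheory Filter

variable {Ω : Type*}

/-- A reward process: progressively measurable, with `ξ_τ` integrable for every
stopping time `τ` with values in `[0,T]`. -/
def IsRewardProcess {m0 : MeasurableSpace Ω} (𝓕 : Filtration ℝ m0) (P : Measure Ω)
    (T : ℝ) (ξ : ℝ → Ω → ℝ) : Prop :=
  ProgMeasurable 𝓕 ξ ∧
    ∀ τ : Ω → ℝ, IsStoppingTime 𝓕 (fun ω => ((τ ω : ℝ) : WithTop ℝ)) → (∀ ω, τ ω ∈ Set.Icc 0 T) →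
      Integrable (fun ω => ξ (τ ω) ω) P

/-- `V` is the value family of the optimal stopping problem with reward `ξ`:
for every stopping time `S` with values in `[0,T]`, `V S` is `𝓕_S`-measurable,
integrable, dominates `E[ξ_τ | 𝓕_S]` for every stopping time `τ` with `S ≤ τ ≤ T`
a.s., and is a.s. smallest with this property, i.e.
`V S = ess sup_{τ ∈ 𝓣_S} E[ξ_τ | 𝓕_S]`. -/
def IsValueFamily {m0 : MeasurableSpace Ω} (𝓕 : Filtration ℝ m0) (P : Measure Ω)
    (T : ℝ) (ξ : ℝ → Ω → ℝ) (V : (Ω → ℝ) → Ω → ℝ) : Prop :=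
  ∀ S : Ω → ℝ, ∀ hS : IsStoppingTime 𝓕 (fun ω => ((S ω : ℝ) : WithTop ℝ)), (∀ ω, S ω ∈ Set.Icc 0 T) →
    Measurable[hS.measurableSpace] (V S) ∧ Integrable (V S) P ∧
    (∀ τ : Ω → ℝ, IsStoppingTime 𝓕 (fun ω => ((τ ω : ℝ) : WithTop ℝ)) → (∀ ω, τ ω ∈ Set.Icc 0 T) →
      (∀ᵐ ω ∂P, S ω ≤ τ ω) →
      ∀ᵐ ω ∂P, (P[fun ω' => ξ (τ ω') ω' | hS.measurableSpace]) ω ≤ V S ω) ∧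
    (∀ W : Ω → ℝ, Measurable[hS.measurableSpace] W → Integrable W P →
      (∀ τ : Ω → ℝ, IsStoppingTime 𝓕 (fun ω => ((τ ω : ℝ) : WithTop ℝ)) → (∀ ω, τ ω ∈ Set.Icc 0 T) →
        (∀ᵐ ω ∂P, S ω ≤ τ ω) →
        ∀ᵐ ω ∂P, (P[fun ω' => ξ (τ ω') ω' | hS.measurableSpace]) ω ≤ W ω) →
      ∀ᵐ ω ∂P, V S ω ≤ W ω)


/-- The value family `V` admits monotone approximation at the stopping time `θ`:
there is a sequence `(τ n)` in `𝓣_θ` with `E[ξ_{τ n} | 𝓕_θ]` a.s. nondecreasing in `n`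
and converging a.s. to `V θ`. -/
def AdmitsMonotoneApprox {m0 : MeasurableSpace Ω} (𝓕 : Filtration ℝ m0) (P : Measure Ω)
    (T : ℝ) (ξ : ℝ → Ω → ℝ) (V : (Ω → ℝ) → Ω → ℝ)
    (θ : Ω → ℝ) (hθ : IsStoppingTime 𝓕 (fun ω => ((θ ω : ℝ) : WithTop ℝ))) : Prop :=
  ∃ τ : ℕ → Ω → ℝ,
    (∀ n, IsStoppingTime 𝓕 (fun ω => ((τ n ω : ℝ) : WithTop ℝ))) ∧ (∀ n ω, τ n ω ∈ Set.Icc 0 T) ∧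
    (∀ n, ∀ᵐ ω ∂P, θ ω ≤ τ n ω) ∧
    (∀ᵐ ω ∂P, Monotone fun n => (P[fun ω' => ξ (τ n ω') ω' | hθ.measurableSpace]) ω) ∧
    (∀ᵐ ω ∂P, Tendsto (fun n => (P[fun ω' => ξ (τ n ω') ω' | hθ.measurableSpace]) ω)
      atTop (nhds (V θ ω)))

private lemma ae_le_of_forall_setIntegral_le_aux {Ω : Type*} {m m0 : MeasurableSpace Ω}
    (hm : m ≤ m0) (P : Measure Ω) [IsFiniteMeasure P] {f g : Ω → ℝ}
    (hfi : Integrable f P) (hgi : Integrable g P)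
    (hfm : StronglyMeasurable[m] f) (hgm : StronglyMeasurable[m] g)
    (h : ∀ A : Set Ω, MeasurableSet[m] A → ∫ ω in A, f ω ∂P ≤ ∫ ω in A, g ω ∂P) :
    ∀ᵐ ω ∂P, f ω ≤ g ω := by
  set A : Set Ω := {ω | g ω < f ω} with hAdef
  have hAm : MeasurableSet[m] A := measurableSet_lt hgm.measurable hfm.measurable
  have hAm0 : MeasurableSet A := hm _ hAm
  have hsub : Integrable (fun ω => f ω - g ω) P := hfi.sub hgi
  have h1 : ∫ ω in A, (f ω - g ω) ∂P ≤ 0 := by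
    rw [integral_sub hfi.integrableOn hgi.integrableOn, sub_nonpos]
    exact h A hAm
  have h2 : 0 ≤ ∫ ω in A, (f ω - g ω) ∂P :=
    setIntegral_nonneg hAm0 fun ω hω => sub_nonneg.mpr (le_of_lt hω)
  have h3 : ∫ ω in A, (f ω - g ω) ∂P = 0 := le_antisymm h1 h2
  have h4 : (fun ω => f ω - g ω) =ᵐ[P.restrict A] 0 := by
    refine (integral_eq_zero_iff_of_nonneg_ae ?_ hsub.restrict).mp h3
    filter_upwards [ae_restrict_mem hAm0] with ω hω
    exact sub_nonneg.mpr (le_of_lt hω)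
  have h5 : ∀ᵐ ω ∂P.restrict A, False := by
    filter_upwards [ae_restrict_mem hAm0, h4] with ω hω hω0
    exact (ne_of_gt (sub_pos.mpr hω)) hω0
  have h6 : P A = 0 := by
    have := ae_iff.mp h5
    simpa [Measure.restrict_apply_self] using this
  rw [ae_iff]
  simpa [not_le] using h6

theorem value_family_is_snell_envelope_family
    {m0 : MeasurableSpace Ω} (𝓕 : Filtration ℝ m0) (P : Measure Ω)
    [IsProbabilityMeasure P] (T : ℝ) (hT : 0 < T)
    (ξ : ℝ → Ω → ℝ) (V : (Ω → ℝ) → Ω → ℝ)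
    (hξ : IsRewardProcess 𝓕 P T ξ) (hV : IsValueFamily 𝓕 P T ξ V)
    (M : Ω → ℝ) (hM_int : Integrable M P)
    (hbound : ∀ᵐ ω ∂P, ∀ t ∈ Set.Icc (0 : ℝ) T, |ξ t ω| ≤ M ω)
    (happrox : ∀ θ : Ω → ℝ, ∀ hθ : IsStoppingTime 𝓕 (fun ω => ((θ ω : ℝ) : WithTop ℝ)), (∀ ω, θ ω ∈ Set.Icc 0 T) →
      AdmitsMonotoneApprox 𝓕 P T ξ V θ hθ) :
    -- (a) V dominates ξ
    (∀ S : Ω → ℝ, IsStoppingTime 𝓕 (fun ω => ((S ω : ℝ) : WithTop ℝ)) → (∀ ω, S ω ∈ Set.Icc 0 T) →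
      ∀ᵐ ω ∂P, ξ (S ω) ω ≤ V S ω) ∧
    -- (b) V is a strong supermartingale family
    (∀ S θ : Ω → ℝ, ∀ hS : IsStoppingTime 𝓕 (fun ω => ((S ω : ℝ) : WithTop ℝ)), IsStoppingTime 𝓕 (fun ω => ((θ ω : ℝ) : WithTop ℝ)) →
      (∀ ω, S ω ∈ Set.Icc 0 T) → (∀ ω, θ ω ∈ Set.Icc 0 T) →
      (∀ᵐ ω ∂P, S ω ≤ θ ω) →
      ∀ᵐ ω ∂P, (P[V θ | hS.measurableSpace]) ω ≤ V S ω) ∧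
    -- (c) V is the smallest such family dominating ξ
    (∀ V' : (Ω → ℝ) → Ω → ℝ,
      (∀ S : Ω → ℝ, ∀ hS : IsStoppingTime 𝓕 (fun ω => ((S ω : ℝ) : WithTop ℝ)), (∀ ω, S ω ∈ Set.Icc 0 T) →
        Measurable[hS.measurableSpace] (V' S) ∧ Integrable (V' S) P ∧
        (∀ᵐ ω ∂P, ξ (S ω) ω ≤ V' S ω)) →
      (∀ S θ : Ω → ℝ, ∀ hS : IsStoppingTime 𝓕 (fun ω => ((S ω : ℝ) : WithTop ℝ)), IsStoppingTime 𝓕 (fun ω => ((θ ω : ℝ) : WithTop ℝ)) →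
        (∀ ω, S ω ∈ Set.Icc 0 T) → (∀ ω, θ ω ∈ Set.Icc 0 T) →
        (∀ᵐ ω ∂P, S ω ≤ θ ω) →
        ∀ᵐ ω ∂P, (P[V' θ | hS.measurableSpace]) ω ≤ V' S ω) →
      ∀ S : Ω → ℝ, IsStoppingTime 𝓕 (fun ω => ((S ω : ℝ) : WithTop ℝ)) → (∀ ω, S ω ∈ Set.Icc 0 T) →
        ∀ᵐ ω ∂P, V S ω ≤ V' S ω) := by
  obtain ⟨hprog, hint⟩ := hξ
  have hVprop := hV
  refine ⟨?_, ?_, ?_⟩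
  · -- (a)
    intro S hS hST
    obtain ⟨hmS, hiS, hdomS, hminS⟩ := hV S hS hST
    have h1 := hdomS S hS hST (Filter.Eventually.of_forall fun ω => le_rfl)
    have hsm : StronglyMeasurable[hS.measurableSpace] (fun ω => ξ (S ω) ω) :=
      (measurable_stoppedValue hprog hS).stronglyMeasurable
    have h2 : P[fun ω' => ξ (S ω') ω' | hS.measurableSpace] = fun ω' => ξ (S ω') ω' :=
      condExp_of_stronglyMeasurable hS.measurableSpace_le hsm (hint S hS hST)
    rw [h2] at h1
    exact h1
  · -- (b)
    intro S θ hS hθ hST hθT hle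
    obtain ⟨hmS, hiS, hdomS, hminS⟩ := hV S hS hST
    obtain ⟨hmθ, hiθ, hdomθ, hminθ⟩ := hV θ hθ hθT
    obtain ⟨τ, hτstop, hτT, hθτ, hmono, htend⟩ := happrox θ hθ hθT
    have hmle : hS.measurableSpace ≤ m0 := hS.measurableSpace_le
    refine ae_le_of_forall_setIntegral_le_aux hmle P integrable_condExp hiS
      stronglyMeasurable_condExp hmS.stronglyMeasurable ?_
    intro A hA
    have hAm0 : MeasurableSet A := hmle _ hA
    rw [setIntegral_condExp hmle hiθ hA]
    set A' : Set Ω := A ∩ {ω | S ω ≤ θ ω} with hA'def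
    have hA'θ : MeasurableSet[hθ.measurableSpace] A' :=
      (IsStoppingTime.measurableSpace_mono (hS.min hθ) hθ fun ω => min_le_right _ _) _
        (by have := hS.measurableSet_inter_le hθ A hA; simpa only [WithTop.coe_le_coe] using this)
    have hAeq : A =ᵐ[P] A' := by
      filter_upwards [hle] with ω h
      change (ω ∈ A) = (ω ∈ A')
      simp only [hA'def, Set.mem_inter_iff, Set.mem_setOf_eq, eq_iff_iff]
      exact ⟨fun hA1 => ⟨hA1, h⟩, fun hA1 => hA1.1⟩
    have key : ∀ n, ∫ ω in A', (P[fun ω' => ξ (τ n ω') ω' | hθ.measurableSpace]) ω ∂P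
        ≤ ∫ ω in A, V S ω ∂P := by
      intro n
      have hint_n : Integrable (fun ω => ξ (τ n ω) ω) P := hint (τ n) (hτstop n) (hτT n)
      rw [setIntegral_condExp hθ.measurableSpace_le hint_n hA'θ,
        setIntegral_congr_set hAeq.symm, ← setIntegral_condExp hmle hint_n hA]
      have hSτ : ∀ᵐ ω ∂P, S ω ≤ τ n ω := by
        filter_upwards [hle, hθτ n] with ω h1 h2 using h1.trans h2
      exact setIntegral_mono_ae integrable_condExp.integrableOn hiS.integrableOn
        (hdomS (τ n) (hτstop n) (hτT n) hSτ)
    have hlim : Tendsto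
        (fun n => ∫ ω in A', (P[fun ω' => ξ (τ n ω') ω' | hθ.measurableSpace]) ω ∂P)
        atTop (nhds (∫ ω in A', V θ ω ∂P)) :=
      integral_tendsto_of_tendsto_of_monotone (fun n => integrable_condExp.restrict)
        hiθ.restrict (ae_restrict_of_ae hmono) (ae_restrict_of_ae htend)
    calc ∫ ω in A, V θ ω ∂P = ∫ ω in A', V θ ω ∂P := setIntegral_congr_set hAeq
      _ ≤ ∫ ω in A, V S ω ∂P := le_of_tendsto hlim (Filter.Eventually.of_forall key)
  · -- (c)
    intro V' hdom' hsuper' S hSstop hST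
    obtain ⟨hmS, hiS, hdomS, hminS⟩ := hV S hSstop hST
    obtain ⟨hmS', hiS', _⟩ := hdom' S hSstop hST
    refine hminS (V' S) hmS' hiS' ?_
    intro τ hτ hτT hSτ
    obtain ⟨hmτ', hiτ', hd'τ⟩ := hdom' τ hτ hτT
    have h2 : P[fun ω' => ξ (τ ω') ω' | hSstop.measurableSpace]
        ≤ᵐ[P] P[V' τ | hSstop.measurableSpace] :=
      condExp_mono (hint τ hτ hτT) hiτ' hd'τ
    have h3 := hsuper' S τ hSstop hτ hST hτT hSτ
    filter_upwards [h2, h3] with ω ha hb using ha.trans hb
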